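/- In the restricted class-segregated buffer model with one queue per value v_1 < ... < v_m, all of capacity B, for every input sequence σ and every feasible diligent schedule OPT, it holds that ∑_{j=1}^{m-1} v_j (A*_j − A_j) ≤ ∑_{j=1}^{m-1} v_j A_{j+1}, where A_j and A*_j are the numbers of v_j-packets accepted by GREEDY and by OPT, respectively. -/
import Mathlib


/-!
Model of class-segregated buffer management (Al-Bawani, Souza).

A switch has `n` queues and `m` packet values `val : Fin m → ℝ`; queue `q` is
assigned value index `qval q` and has capacity `cap q`.  An input sequence is a
list of events: an `arrive q` event (a packet destined to queue `q`) or a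
`send` event.  A (diligent) schedule is given by its decisions at send events,
`dec : ℕ → Option (Fin n)` (decision for the `k`-th send event): acceptance is
forced (accept iff the destination queue is not full), at a send event the
schedule transmits one packet from the chosen non-empty queue, and it may
choose `none` only if all queues are empty.  `run` simulates the schedule,
tracking queue contents, the number of accepted packets of each value, and the
number of transmitted packets of each value.  `Feasible` expresses diligence,
and `GreedyFeasible` additionally requires that every transmitted packet has
the highest value among non-empty queues (ties broken arbitrarily).
`benefit` is the total value of transmitted packets.
-/

namespace BufferModel

inductive BEvent (n : ℕ) : Type where
  | arrive (q : Fin n) : BEvent n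
  | send : BEvent n
deriving DecidableEq

/-- `queue q` = number of packets currently in queue `q`; `acc i` = number of
packets of value index `i` accepted so far; `trans i` = number of packets of
value index `i` transmitted so far. -/
structure BState (n m : ℕ) where
  queue : Fin n → ℕ
  acc : Fin m → ℕ
  trans : Fin m → ℕ

def initState (n m : ℕ) : BState n m :=
  ⟨fun _ => 0, fun _ => 0, fun _ => 0⟩

/-- Diligent processing of an arrive event at queue `q`: accept iff there is room. -/
def arriveStep {n m : ℕ} (cap : Fin n → ℕ) (qval : Fin n → Fin m)
    (s : BState n m) (q : Fin n) : BState n m :=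
  if s.queue q < cap q then
    { queue := Function.update s.queue q (s.queue q + 1)
      acc := Function.update s.acc (qval q) (s.acc (qval q) + 1)
      trans := s.trans }
  else s

/-- Processing of a send event with decision `d`. -/
def sendStep {n m : ℕ} (qval : Fin n → Fin m) (s : BState n m)
    (d : Option (Fin n)) : BState n m :=
  match d with
  | some q =>
      if 0 < s.queue q then
        { queue := Function.update s.queue q (s.queue q - 1)
          acc := s.acc
          trans := Function.update s.trans (qval q) (s.trans (qval q) + 1) }
      else s
  | none => s

/-- Simulate the schedule with send-decisions `dec` on an event list, starting
with send-counter `k` and state `s`. -/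
def run {n m : ℕ} (cap : Fin n → ℕ) (qval : Fin n → Fin m)
    (dec : ℕ → Option (Fin n)) :
    List (BEvent n) → ℕ → BState n m → BState n m
  | [], _, s => s
  | BEvent.arrive q :: es, k, s => run cap qval dec es k (arriveStep cap qval s q)
  | BEvent.send :: es, k, s => run cap qval dec es (k + 1) (sendStep qval s (dec k))

/-- The schedule `dec` is feasible (diligent): at each send event it transmits
from a non-empty queue, and it stays idle only if all queues are empty. -/
def Feasible {n m : ℕ} (cap : Fin n → ℕ) (qval : Fin n → Fin m)
    (dec : ℕ → Option (Fin n)) :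
    List (BEvent n) → ℕ → BState n m → Prop
  | [], _, _ => True
  | BEvent.arrive q :: es, k, s => Feasible cap qval dec es k (arriveStep cap qval s q)
  | BEvent.send :: es, k, s =>
      (match dec k with
       | some q => 0 < s.queue q
       | none => ∀ q, s.queue q = 0) ∧
      Feasible cap qval dec es (k + 1) (sendStep qval s (dec k))

/-- The schedule `dec` is a GREEDY schedule: feasible, and at every send event
it transmits a packet from a non-empty queue of the highest value. -/
def GreedyFeasible {n m : ℕ} (val : Fin m → ℝ) (cap : Fin n → ℕ)
    (qval : Fin n → Fin m) (dec : ℕ → Option (Fin n)) :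
    List (BEvent n) → ℕ → BState n m → Prop
  | [], _, _ => True
  | BEvent.arrive q :: es, k, s =>
      GreedyFeasible val cap qval dec es k (arriveStep cap qval s q)
  | BEvent.send :: es, k, s =>
      (match dec k with
       | some q => 0 < s.queue q ∧
           ∀ q', 0 < s.queue q' → val (qval q') ≤ val (qval q)
       | none => ∀ q, s.queue q = 0) ∧
      GreedyFeasible val cap qval dec es (k + 1) (sendStep qval s (dec k))

/-- Benefit of a schedule: total value of the transmitted packets. -/
def benefit {n m : ℕ} (val : Fin m → ℝ) (s : BState n m) : ℝ :=
  ∑ i, val i * (s.trans i : ℝ)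

end BufferModel

namespace BufferModel

/-- One-based access (as a real number) to a family of packet counts indexed
by `Fin m`: `accR a j` is the count for the `j`-th value, `1 ≤ j ≤ m`. -/
def accR {m : ℕ} (a : Fin m → ℕ) (j : ℕ) : ℝ :=
  if h : 1 ≤ j ∧ j ≤ m then (a ⟨j - 1, by omega⟩ : ℝ) else 0

/-- One-based access to the packet values: `valI v j = v_j` for `1 ≤ j ≤ m`. -/
def valI {m : ℕ} (v : Fin m → ℝ) (j : ℕ) : ℝ :=
  if h : 1 ≤ j ∧ j ≤ m then v ⟨j - 1, by omega⟩ else 0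


/-! ### Proof apparatus -/

section CentralProof

variable {m : ℕ}

/-- Indices `j` with `k ≤ j ≤ m-2` (the non-top levels at or above threshold `k`). -/
def lowF (m k : ℕ) : Finset (Fin m) :=
  Finset.univ.filter fun j => k ≤ (j : ℕ) ∧ (j : ℕ) + 1 < m

/-- Indices `j` with `j ≥ k+1`. -/
def hiF (m k : ℕ) : Finset (Fin m) :=
  Finset.univ.filter fun j => k + 1 ≤ (j : ℕ)

@[simp] lemma mem_lowF {k : ℕ} {j : Fin m} :
    j ∈ lowF m k ↔ k ≤ (j : ℕ) ∧ (j : ℕ) + 1 < m := by simp [lowF]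

@[simp] lemma mem_hiF {k : ℕ} {j : Fin m} :
    j ∈ hiF m k ↔ k + 1 ≤ (j : ℕ) := by simp [hiF]

/-- The potential function: `Φ_k` plus queue-correction terms. -/
def psi (k : ℕ) (s u : BState m m) : ℤ :=
  (∑ j ∈ lowF m k,
      ((u.acc j : ℤ) - (s.acc j : ℤ) + ((s.queue j - u.queue j : ℕ) : ℤ)))
    + ∑ j ∈ hiF m k, ((s.queue j : ℤ) - (s.acc j : ℤ))

lemma sum_diff_single {α : Type*} [DecidableEq α] {S : Finset α} {F F' : α → ℤ} {q : α}
    (h : ∀ j, j ≠ q → F' j = F j) :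
    ∑ j ∈ S, F' j - ∑ j ∈ S, F j = if q ∈ S then F' q - F q else 0 := by
  by_cases hq : q ∈ S
  · rw [if_pos hq, ← Finset.sum_erase_add S F' hq, ← Finset.sum_erase_add S F hq,
      Finset.sum_congr rfl fun j hj => h j (Finset.ne_of_mem_erase hj)]
    ring
  · rw [if_neg hq, Finset.sum_congr rfl fun j hj => h j fun e => hq (e ▸ hj)]
    ring

lemma sum_diff_pair {α : Type*} [DecidableEq α] {S : Finset α} {F F' : α → ℤ} {q1 q2 : α}
    (hne : q1 ≠ q2) (h : ∀ j, j ≠ q1 → j ≠ q2 → F' j = F j) :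
    ∑ j ∈ S, F' j - ∑ j ∈ S, F j =
      (if q1 ∈ S then F' q1 - F q1 else 0) + (if q2 ∈ S then F' q2 - F q2 else 0) := by
  have h1 : ∑ j ∈ S, F' j - ∑ j ∈ S, Function.update F q2 (F' q2) j =
      if q1 ∈ S then F' q1 - Function.update F q2 (F' q2) q1 else 0 := by
    refine sum_diff_single fun j hj1 => ?_
    by_cases hj2 : j = q2
    · subst hj2; simp
    · simp [Function.update_of_ne hj2, h j hj1 hj2]
  have h2 : ∑ j ∈ S, Function.update F q2 (F' q2) j - ∑ j ∈ S, F j =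
      if q2 ∈ S then F' q2 - F q2 else 0 := by
    have := sum_diff_single (S := S) (F := F) (F' := Function.update F q2 (F' q2))
      (q := q2) (fun j hj => Function.update_of_ne hj _ _)
    simpa using this
  have hq1 : Function.update F q2 (F' q2) q1 = F q1 := Function.update_of_ne hne _ _
  rw [hq1] at h1
  linarith

lemma psi_arrive (B k : ℕ) (s u : BState m m) (q : Fin m) :
    psi k (arriveStep (fun _ => B) id s q) (arriveStep (fun _ => B) id u q) ≤ psi k s u := by
  unfold arriveStep
  by_cases hs : s.queue q < B <;> by_cases hu : u.queue q < B <;>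
    simp only [hs, hu, if_true, if_false, id_eq] <;> unfold psi
  · -- both accept
    have h1 := sum_diff_single (S := lowF m k)
      (F := fun j => ((u.acc j : ℤ) - (s.acc j : ℤ) + ((s.queue j - u.queue j : ℕ) : ℤ)))
      (F' := fun j => ((Function.update u.acc q (u.acc q + 1) j : ℤ)
        - (Function.update s.acc q (s.acc q + 1) j : ℤ)
        + ((Function.update s.queue q (s.queue q + 1) j
            - Function.update u.queue q (u.queue q + 1) j : ℕ) : ℤ)))
      (q := q) (fun j hj => by simp [Function.update_of_ne hj])
    have h2 := sum_diff_single (S := hiF m k)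
      (F := fun j => ((s.queue j : ℤ) - (s.acc j : ℤ)))
      (F' := fun j => ((Function.update s.queue q (s.queue q + 1) j : ℤ)
        - (Function.update s.acc q (s.acc q + 1) j : ℤ)))
      (q := q) (fun j hj => by simp [Function.update_of_ne hj])
    simp only [Function.update_self] at h1 h2
    have hb : (if q ∈ lowF m k then
        ((u.acc q : ℤ) + 1 - ((s.acc q : ℤ) + 1)
          + ((s.queue q + 1 - (u.queue q + 1) : ℕ) : ℤ))
        - ((u.acc q : ℤ) - (s.acc q : ℤ) + ((s.queue q - u.queue q : ℕ) : ℤ)) else 0)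
      + (if q ∈ hiF m k then
        (((s.queue q : ℕ) + 1 : ℕ) : ℤ) - (((s.acc q : ℕ) + 1 : ℕ) : ℤ)
          - ((s.queue q : ℤ) - (s.acc q : ℤ)) else 0) ≤ 0 := by
      split_ifs <;> push_cast <;> omega
    push_cast at h1 h2 hb ⊢
    linarith
  · -- greedy accepts, opt full
    have h1 := sum_diff_single (S := lowF m k)
      (F := fun j => ((u.acc j : ℤ) - (s.acc j : ℤ) + ((s.queue j - u.queue j : ℕ) : ℤ)))
      (F' := fun j => ((u.acc j : ℤ) - (Function.update s.acc q (s.acc q + 1) j : ℤ)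
        + ((Function.update s.queue q (s.queue q + 1) j - u.queue j : ℕ) : ℤ)))
      (q := q) (fun j hj => by simp [Function.update_of_ne hj])
    have h2 := sum_diff_single (S := hiF m k)
      (F := fun j => ((s.queue j : ℤ) - (s.acc j : ℤ)))
      (F' := fun j => ((Function.update s.queue q (s.queue q + 1) j : ℤ)
        - (Function.update s.acc q (s.acc q + 1) j : ℤ)))
      (q := q) (fun j hj => by simp [Function.update_of_ne hj])
    simp only [Function.update_self] at h1 h2
    have hb : (if q ∈ lowF m k then
        ((u.acc q : ℤ) - ((s.acc q : ℤ) + 1) + ((s.queue q + 1 - u.queue q : ℕ) : ℤ))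
        - ((u.acc q : ℤ) - (s.acc q : ℤ) + ((s.queue q - u.queue q : ℕ) : ℤ)) else 0)
      + (if q ∈ hiF m k then
        (((s.queue q : ℕ) + 1 : ℕ) : ℤ) - (((s.acc q : ℕ) + 1 : ℕ) : ℤ)
          - ((s.queue q : ℤ) - (s.acc q : ℤ)) else 0) ≤ 0 := by
      split_ifs <;> push_cast <;> omega
    push_cast at h1 h2 hb ⊢
    linarith
  · -- greedy full, opt accepts
    have h1 := sum_diff_single (S := lowF m k)
      (F := fun j => ((u.acc j : ℤ) - (s.acc j : ℤ) + ((s.queue j - u.queue j : ℕ) : ℤ)))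
      (F' := fun j => ((Function.update u.acc q (u.acc q + 1) j : ℤ) - (s.acc j : ℤ)
        + ((s.queue j - Function.update u.queue q (u.queue q + 1) j : ℕ) : ℤ)))
      (q := q) (fun j hj => by simp [Function.update_of_ne hj])
    simp only [Function.update_self] at h1
    have hb : (if q ∈ lowF m k then
        ((u.acc q : ℤ) + 1 - (s.acc q : ℤ) + ((s.queue q - (u.queue q + 1) : ℕ) : ℤ))
        - ((u.acc q : ℤ) - (s.acc q : ℤ) + ((s.queue q - u.queue q : ℕ) : ℤ)) else 0) ≤ 0 := by
      split_ifs <;> push_cast <;> omega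
    push_cast at h1 hb ⊢
    linarith
  · exact le_refl _

lemma psi_send (k : ℕ) (v : Fin m → ℝ) (hv : StrictMono v) (s u : BState m m)
    (gd od : Option (Fin m))
    (hgd : match gd with
      | some q => 0 < s.queue q ∧ ∀ q', 0 < s.queue q' → v (id q') ≤ v (id q)
      | none => ∀ q, s.queue q = 0) :
    psi k (sendStep id s gd) (sendStep id u od) ≤ psi k s u := by
  cases gd with
  | none =>
    have hz : ∀ q, s.queue q = 0 := hgd
    cases od with
    | none => exact le_refl _
    | some o =>
      by_cases ho : 0 < u.queue o
      · simp only [sendStep, ho, if_true]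
        unfold psi
        have h1 := sum_diff_single (S := lowF m k)
          (F := fun j => ((u.acc j : ℤ) - (s.acc j : ℤ) + ((s.queue j - u.queue j : ℕ) : ℤ)))
          (F' := fun j => ((u.acc j : ℤ) - (s.acc j : ℤ)
            + ((s.queue j - Function.update u.queue o (u.queue o - 1) j : ℕ) : ℤ)))
          (q := o) (fun j hj => by simp [Function.update_of_ne hj])
        simp only [Function.update_self] at h1
        have hzo := hz o
        have hb : (if o ∈ lowF m k then
            ((u.acc o : ℤ) - (s.acc o : ℤ) + ((s.queue o - (u.queue o - 1) : ℕ) : ℤ))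
            - ((u.acc o : ℤ) - (s.acc o : ℤ) + ((s.queue o - u.queue o : ℕ) : ℤ)) else 0)
            ≤ 0 := by
          split_ifs <;> omega
        linarith
      · simp only [sendStep, ho, if_false]
        exact le_refl _
  | some gq =>
    obtain ⟨hpos, hmax⟩ := hgd
    have hstep : sendStep (m := m) id s (some gq) =
        { queue := Function.update s.queue gq (s.queue gq - 1)
          acc := s.acc
          trans := Function.update s.trans gq (s.trans gq + 1) } := by
      simp [sendStep, hpos]
    have key : ∀ u' : BState m m, u'.acc = u.acc →
        (∀ j, j ≠ gq → ((s.queue j - u'.queue j : ℕ) : ℤ)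
            = ((s.queue j - u.queue j : ℕ) : ℤ)) →
        (((Function.update s.queue gq (s.queue gq - 1) gq - u'.queue gq : ℕ) : ℤ)
            - ((s.queue gq - u.queue gq : ℕ) : ℤ) ≤ 1) →
        ((((Function.update s.queue gq (s.queue gq - 1) gq - u'.queue gq : ℕ) : ℤ)
            - ((s.queue gq - u.queue gq : ℕ) : ℤ) ≤ 0) ∨ (k + 1 ≤ (gq : ℕ) ∧ k ≤ (gq : ℕ))) →
        True := fun _ _ _ _ _ => trivial
    clear key
    cases od with
    | none =>
      rw [hstep]
      show psi k _ u ≤ psi k s u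
      unfold psi
      dsimp only
      have h1 := sum_diff_single (S := lowF m k)
        (F := fun j => ((u.acc j : ℤ) - (s.acc j : ℤ) + ((s.queue j - u.queue j : ℕ) : ℤ)))
        (F' := fun j => ((u.acc j : ℤ) - (s.acc j : ℤ)
          + ((Function.update s.queue gq (s.queue gq - 1) j - u.queue j : ℕ) : ℤ)))
        (q := gq) (fun j hj => by simp [Function.update_of_ne hj])
      have h2 := sum_diff_single (S := hiF m k)
        (F := fun j => ((s.queue j : ℤ) - (s.acc j : ℤ)))
        (F' := fun j => ((Function.update s.queue gq (s.queue gq - 1) j : ℤ) - (s.acc j : ℤ)))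
        (q := gq) (fun j hj => by simp [Function.update_of_ne hj])
      simp only [Function.update_self] at h1 h2
      have hb : (if gq ∈ lowF m k then
          ((u.acc gq : ℤ) - (s.acc gq : ℤ) + ((s.queue gq - 1 - u.queue gq : ℕ) : ℤ))
          - ((u.acc gq : ℤ) - (s.acc gq : ℤ) + ((s.queue gq - u.queue gq : ℕ) : ℤ)) else 0)
        + (if gq ∈ hiF m k then
          (((s.queue gq - 1 : ℕ) : ℤ) - (s.acc gq : ℤ)) - ((s.queue gq : ℤ) - (s.acc gq : ℤ))
          else 0) ≤ 0 := by
        split_ifs <;> omega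
      linarith
    | some o =>
      by_cases ho : 0 < u.queue o
      · by_cases heq : o = gq
        · subst heq
          rw [hstep]
          simp only [sendStep, ho, if_true]
          unfold psi
          have h1 := sum_diff_single (S := lowF m k)
            (F := fun j => ((u.acc j : ℤ) - (s.acc j : ℤ) + ((s.queue j - u.queue j : ℕ) : ℤ)))
            (F' := fun j => ((u.acc j : ℤ) - (s.acc j : ℤ)
              + ((Function.update s.queue o (s.queue o - 1) j
                  - Function.update u.queue o (u.queue o - 1) j : ℕ) : ℤ)))
            (q := o) (fun j hj => by simp [Function.update_of_ne hj])
          have h2 := sum_diff_single (S := hiF m k)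
            (F := fun j => ((s.queue j : ℤ) - (s.acc j : ℤ)))
            (F' := fun j => ((Function.update s.queue o (s.queue o - 1) j : ℤ) - (s.acc j : ℤ)))
            (q := o) (fun j hj => by simp [Function.update_of_ne hj])
          simp only [Function.update_self] at h1 h2
          have hb : (if o ∈ lowF m k then
              ((u.acc o : ℤ) - (s.acc o : ℤ) + ((s.queue o - 1 - (u.queue o - 1) : ℕ) : ℤ))
              - ((u.acc o : ℤ) - (s.acc o : ℤ) + ((s.queue o - u.queue o : ℕ) : ℤ)) else 0)
            + (if o ∈ hiF m k then
              (((s.queue o - 1 : ℕ) : ℤ) - (s.acc o : ℤ)) - ((s.queue o : ℤ) - (s.acc o : ℤ))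
              else 0) ≤ 0 := by
            split_ifs <;> omega
          linarith
        · rw [hstep]
          simp only [sendStep, ho, if_true]
          unfold psi
          have h1 := sum_diff_pair (S := lowF m k)
            (F := fun j => ((u.acc j : ℤ) - (s.acc j : ℤ) + ((s.queue j - u.queue j : ℕ) : ℤ)))
            (F' := fun j => ((u.acc j : ℤ) - (s.acc j : ℤ)
              + ((Function.update s.queue gq (s.queue gq - 1) j
                  - Function.update u.queue o (u.queue o - 1) j : ℕ) : ℤ)))
            (q1 := o) (q2 := gq) heq
            (fun j hj1 hj2 => by simp [Function.update_of_ne hj1, Function.update_of_ne hj2])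
          have h2 := sum_diff_single (S := hiF m k)
            (F := fun j => ((s.queue j : ℤ) - (s.acc j : ℤ)))
            (F' := fun j => ((Function.update s.queue gq (s.queue gq - 1) j : ℤ) - (s.acc j : ℤ)))
            (q := gq) (fun j hj => by simp [Function.update_of_ne hj])
          simp only [Function.update_self,
            Function.update_of_ne heq, Function.update_of_ne (Ne.symm heq)] at h1 h2
          have hb : (if o ∈ lowF m k then
              ((u.acc o : ℤ) - (s.acc o : ℤ) + ((s.queue o - (u.queue o - 1) : ℕ) : ℤ))
              - ((u.acc o : ℤ) - (s.acc o : ℤ) + ((s.queue o - u.queue o : ℕ) : ℤ)) else 0)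
            + ((if gq ∈ lowF m k then
              ((u.acc gq : ℤ) - (s.acc gq : ℤ) + ((s.queue gq - 1 - u.queue gq : ℕ) : ℤ))
              - ((u.acc gq : ℤ) - (s.acc gq : ℤ) + ((s.queue gq - u.queue gq : ℕ) : ℤ)) else 0)
            + (if gq ∈ hiF m k then
              (((s.queue gq - 1 : ℕ) : ℤ) - (s.acc gq : ℤ)) - ((s.queue gq : ℤ) - (s.acc gq : ℤ))
              else 0)) ≤ 0 := by
            by_cases hGD : u.queue o ≤ s.queue o
            · have hso : 0 < s.queue o := lt_of_lt_of_le ho hGD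
              have hvv := hmax o hso
              have hlt : (o : ℕ) < (gq : ℕ) := by
                rcases lt_or_gt_of_ne heq with h | h
                · exact h
                · exact absurd (hv h) (not_lt.mpr hvv)
              simp only [mem_lowF, mem_hiF]
              split_ifs <;> omega
            · simp only [mem_lowF, mem_hiF]
              split_ifs <;> omega
          linarith
      · rw [hstep]
        simp only [sendStep, ho, if_false]
        unfold psi
        have h1 := sum_diff_single (S := lowF m k)
          (F := fun j => ((u.acc j : ℤ) - (s.acc j : ℤ) + ((s.queue j - u.queue j : ℕ) : ℤ)))
          (F' := fun j => ((u.acc j : ℤ) - (s.acc j : ℤ)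
            + ((Function.update s.queue gq (s.queue gq - 1) j - u.queue j : ℕ) : ℤ)))
          (q := gq) (fun j hj => by simp [Function.update_of_ne hj])
        have h2 := sum_diff_single (S := hiF m k)
          (F := fun j => ((s.queue j : ℤ) - (s.acc j : ℤ)))
          (F' := fun j => ((Function.update s.queue gq (s.queue gq - 1) j : ℤ) - (s.acc j : ℤ)))
          (q := gq) (fun j hj => by simp [Function.update_of_ne hj])
        simp only [Function.update_self] at h1 h2
        have hb : (if gq ∈ lowF m k then
            ((u.acc gq : ℤ) - (s.acc gq : ℤ) + ((s.queue gq - 1 - u.queue gq : ℕ) : ℤ))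
            - ((u.acc gq : ℤ) - (s.acc gq : ℤ) + ((s.queue gq - u.queue gq : ℕ) : ℤ)) else 0)
          + (if gq ∈ hiF m k then
            (((s.queue gq - 1 : ℕ) : ℤ) - (s.acc gq : ℤ)) - ((s.queue gq : ℤ) - (s.acc gq : ℤ))
            else 0) ≤ 0 := by
          split_ifs <;> omega
        linarith

lemma psi_run (k B : ℕ) (v : Fin m → ℝ) (hv : StrictMono v) (g d : ℕ → Option (Fin m)) :
    ∀ (es : List (BEvent m)) (n : ℕ) (s u : BState m m),
      GreedyFeasible v (fun _ => B) id g es n s →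
      Feasible (fun _ => B) id d es n u →
      psi k (run (fun _ => B) id g es n s) (run (fun _ => B) id d es n u) ≤ psi k s u
  | [], _, _, _, _, _ => le_refl _
  | BEvent.arrive q :: es, n, s, u, hg, hd =>
      le_trans
        (psi_run k B v hv g d es n (arriveStep (fun _ => B) id s q)
          (arriveStep (fun _ => B) id u q) hg hd)
        (psi_arrive B k s u q)
  | BEvent.send :: es, n, s, u, hg, hd =>
      le_trans
        (psi_run k B v hv g d es (n + 1) (sendStep id s (g n)) (sendStep id u (d n))
          hg.2 hd.2)
        (psi_send k v hv s u (g n) (d n) hg.1)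

lemma psi_init (k : ℕ) : psi k (initState m m) (initState m m) = 0 := by
  simp [psi, initState]

/-- The central tail inequality `C_k`. -/
lemma central (k B : ℕ) (v : Fin m → ℝ) (hv : StrictMono v) (σ : List (BEvent m))
    (g d : ℕ → Option (Fin m))
    (hg : GreedyFeasible v (fun _ => B) id g σ 0 (initState m m))
    (hd : Feasible (fun _ => B) id d σ 0 (initState m m)) :
    ∑ j ∈ lowF m k, (((run (fun _ => B) id d σ 0 (initState m m)).acc j : ℤ)
        - ((run (fun _ => B) id g σ 0 (initState m m)).acc j : ℤ))
      ≤ ∑ j ∈ hiF m k, ((run (fun _ => B) id g σ 0 (initState m m)).acc j : ℤ) := by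
  have h := psi_run k B v hv g d σ 0 (initState m m) (initState m m) hg hd
  rw [psi_init] at h
  set sg := run (fun _ => B) id g σ 0 (initState m m)
  set ud := run (fun _ => B) id d σ 0 (initState m m)
  unfold psi at h
  have e1 : ∑ j ∈ lowF m k, (((ud.acc j : ℤ)) - (sg.acc j : ℤ))
      ≤ ∑ j ∈ lowF m k,
        ((ud.acc j : ℤ) - (sg.acc j : ℤ) + ((sg.queue j - ud.queue j : ℕ) : ℤ)) :=
    Finset.sum_le_sum fun j _ => by
      have : (0 : ℤ) ≤ ((sg.queue j - ud.queue j : ℕ) : ℤ) := Int.natCast_nonneg _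
      linarith
  have e2 : ∑ j ∈ hiF m k, (-(sg.acc j : ℤ))
      ≤ ∑ j ∈ hiF m k, ((sg.queue j : ℤ) - (sg.acc j : ℤ)) :=
    Finset.sum_le_sum fun j _ => by
      have : (0 : ℤ) ≤ (sg.queue j : ℤ) := Int.natCast_nonneg _
      linarith
  rw [Finset.sum_neg_distrib] at e2
  linarith

/-- Abel-summation style bound. -/
lemma abel_bound (M : ℕ) (V c : ℕ → ℝ)
    (hmono : ∀ i, i + 1 < M → V i ≤ V (i + 1))
    (hnn : ∀ i, i < M → 0 ≤ V i)
    (htail : ∀ k, ∑ i ∈ Finset.Ico k M, c i ≤ 0) :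
    ∑ i ∈ Finset.range M, V i * c i ≤ 0 := by
  have key : ∀ d k, k + d = M →
      ∑ i ∈ Finset.Ico k M, V i * c i ≤ V k * ∑ i ∈ Finset.Ico k M, c i := by
    intro d
    induction d with
    | zero =>
      intro k hk
      subst hk
      simp
    | succ d ih =>
      intro k hk
      have hkM : k < M := by omega
      have ih' := ih (k + 1) (by omega)
      rw [Finset.sum_eq_sum_Ico_succ_bot hkM (fun i => V i * c i),
        Finset.sum_eq_sum_Ico_succ_bot hkM c]
      have hT : ∑ i ∈ Finset.Ico (k + 1) M, c i ≤ 0 := htail (k + 1)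
      have step : V (k + 1) * ∑ i ∈ Finset.Ico (k + 1) M, c i
          ≤ V k * ∑ i ∈ Finset.Ico (k + 1) M, c i := by
        rcases Nat.lt_or_ge (k + 1) M with h | h
        · exact mul_le_mul_of_nonpos_right (hmono k h) hT
        · have : Finset.Ico (k + 1) M = ∅ := Finset.Ico_eq_empty (by omega)
          simp [this]
      nlinarith [ih', step]
  rcases Nat.eq_zero_or_pos M with rfl | hM
  · simp
  · have h := key M 0 (by omega)
    rw [← Finset.range_eq_Ico] at h
    have := htail 0
    rw [← Finset.range_eq_Ico] at this
    have h0 : 0 ≤ V 0 := hnn 0 hM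
    nlinarith

lemma fin_fun_congr {β : Sort*} (f : Fin m → β) {x y : ℕ} (hx : x < m) (hy : y < m)
    (h : x = y) : f ⟨x, hx⟩ = f ⟨y, hy⟩ := by subst h; rfl

lemma acc_cast_congr (a : Fin m → ℕ) {x y : ℕ} (hx : x < m) (hy : y < m) (h : x = y) :
    (a ⟨x, hx⟩ : ℝ) = (a ⟨y, hy⟩ : ℝ) := by subst h; rfl

lemma valI_eq {v : Fin m → ℝ} {j : ℕ} (hj1 : 1 ≤ j) (hj2 : j ≤ m) :
    valI v j = v ⟨j - 1, by omega⟩ := by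
  rw [valI, dif_pos ⟨hj1, hj2⟩]

lemma accR_eq {a : Fin m → ℕ} {j : ℕ} (hj1 : 1 ≤ j) (hj2 : j ≤ m) :
    accR a j = (a ⟨j - 1, by omega⟩ : ℝ) := by
  rw [accR, dif_pos ⟨hj1, hj2⟩]

lemma sum_low_reindex (hm : 1 ≤ m) (k : ℕ) (F : Fin m → ℝ) :
    ∑ i ∈ Finset.Ico k (m - 1), F ⟨min i (m - 1), by omega⟩ = ∑ j ∈ lowF m k, F j := by
  refine Finset.sum_nbij' (i := fun i : ℕ => (⟨min i (m - 1), by omega⟩ : Fin m))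
    (j := fun j : Fin m => (j : ℕ)) ?_ ?_ ?_ ?_ ?_
  · intro i hi
    simp only [Finset.mem_Ico] at hi
    simp only [mem_lowF]
    constructor <;> omega
  · intro j hj
    simp only [mem_lowF] at hj
    simp only [Finset.mem_Ico]
    omega
  · intro i hi
    simp only [Finset.mem_Ico] at hi
    simp only
    omega
  · intro j hj
    simp only [mem_lowF] at hj
    apply Fin.ext
    simp only
    omega
  · intro i hi; rfl

lemma sum_hi_reindex (hm : 1 ≤ m) (k : ℕ) (F : Fin m → ℝ) :
    ∑ i ∈ Finset.Ico k (m - 1), F ⟨min (i + 1) (m - 1), by omega⟩ = ∑ j ∈ hiF m k, F j := by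
  refine Finset.sum_nbij' (i := fun i : ℕ => (⟨min (i + 1) (m - 1), by omega⟩ : Fin m))
    (j := fun j : Fin m => (j : ℕ) - 1) ?_ ?_ ?_ ?_ ?_
  · intro i hi
    simp only [Finset.mem_Ico] at hi
    simp only [mem_hiF]
    omega
  · intro j hj
    simp only [mem_hiF] at hj
    have := j.isLt
    simp only [Finset.mem_Ico]
    omega
  · intro i hi
    simp only [Finset.mem_Ico] at hi
    simp only
    omega
  · intro j hj
    simp only [mem_hiF] at hj
    have := j.isLt
    apply Fin.ext
    simp only
    omega
  · intro i hi; rfl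

end CentralProof

/-- In the restricted class-segregated buffer model (one
queue per value `v_1 < ... < v_m`, all of capacity `B`), for every input
sequence `σ`, every feasible diligent schedule `d` (playing the role of OPT)
and every GREEDY schedule `g`:
`∑_{j=1}^{m-1} v_j (A*_j − A_j) ≤ ∑_{j=1}^{m-1} v_j A_{j+1}`. -/
theorem weighted_central_lemma
    (m B : ℕ) (v : Fin m → ℝ) (hpos : ∀ i, 0 < v i) (hmono : StrictMono v)
    (σ : List (BEvent m)) (g d : ℕ → Option (Fin m))
    (hg : GreedyFeasible v (fun _ => B) id g σ 0 (initState m m))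
    (hd : Feasible (fun _ => B) id d σ 0 (initState m m)) :
    ∑ j ∈ Finset.Icc 1 (m - 1),
        valI v j * (accR (run (fun _ => B) id d σ 0 (initState m m)).acc j -
          accR (run (fun _ => B) id g σ 0 (initState m m)).acc j) ≤
      ∑ j ∈ Finset.Icc 1 (m - 1),
        valI v j * accR (run (fun _ => B) id g σ 0 (initState m m)).acc (j + 1) := by
  rcases Nat.eq_zero_or_pos m with rfl | hm
  · simp [show Finset.Icc 1 (0 - 1) = (∅ : Finset ℕ) by rfl]
  set Ag := (run (fun _ => B) id g σ 0 (initState m m)).acc with hAg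
  set Ad := (run (fun _ => B) id d σ 0 (initState m m)).acc with hAd
  have hIcc : Finset.Icc 1 (m - 1) = Finset.Ico 1 m := by
    rw [← Finset.Ico_add_one_right_eq_Icc]
    congr 1
    omega
  rw [hIcc, Finset.sum_Ico_eq_sum_range, Finset.sum_Ico_eq_sum_range]
  set M := m - 1 with hM
  set V : ℕ → ℝ := fun i => valI v (1 + i) with hV
  set c : ℕ → ℝ := fun i => accR Ad (1 + i) - accR Ag (1 + i) - accR Ag (1 + i + 1) with hc
  have hmono' : ∀ i, i + 1 < M → V i ≤ V (i + 1) := by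
    intro i hi
    have h1 : valI v (1 + i) = v ⟨i, by omega⟩ := by
      rw [valI_eq (by omega) (by omega)]
      exact fin_fun_congr v (by omega) (by omega) (by omega)
    have h2 : valI v (1 + (i + 1)) = v ⟨i + 1, by omega⟩ := by
      rw [valI_eq (by omega) (by omega)]
      exact fin_fun_congr v (by omega) (by omega) (by omega)
    rw [hV]; simp only; rw [h1, h2]
    exact le_of_lt (hmono (by simp [Fin.lt_def]))
  have hnn : ∀ i, i < M → 0 ≤ V i := by
    intro i hi
    rw [hV]; simp only
    rw [valI_eq (by omega) (by omega)]
    exact (hpos _).le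
  have htail : ∀ k, ∑ i ∈ Finset.Ico k M, c i ≤ 0 := by
    intro k
    have hcent := central k B v hmono σ g d hg hd
    have hcast : ∑ j ∈ lowF m k, ((Ad j : ℝ) - (Ag j : ℝ)) ≤ ∑ j ∈ hiF m k, (Ag j : ℝ) := by
      have h1 : ((∑ j ∈ lowF m k, ((Ad j : ℤ) - (Ag j : ℤ)) : ℤ) : ℝ)
          ≤ ((∑ j ∈ hiF m k, (Ag j : ℤ) : ℤ) : ℝ) := by exact_mod_cast hcent
      push_cast at h1
      exact h1
    have e1 : ∑ i ∈ Finset.Ico k M, (accR Ad (1 + i) - accR Ag (1 + i))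
        = ∑ j ∈ lowF m k, ((Ad j : ℝ) - (Ag j : ℝ)) := by
      rw [← sum_low_reindex hm k (fun j => (Ad j : ℝ) - (Ag j : ℝ))]
      refine Finset.sum_congr rfl fun i hi => ?_
      simp only [Finset.mem_Ico] at hi
      rw [accR_eq (by omega) (by omega), accR_eq (by omega) (by omega),
        acc_cast_congr Ad (x := 1 + i - 1) (y := min i (m - 1)) (by omega) (by omega)
          (by omega),
        acc_cast_congr Ag (x := 1 + i - 1) (y := min i (m - 1)) (by omega) (by omega)
          (by omega)]
    have e2 : ∑ i ∈ Finset.Ico k M, accR Ag (1 + i + 1)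
        = ∑ j ∈ hiF m k, (Ag j : ℝ) := by
      rw [← sum_hi_reindex hm k (fun j => (Ag j : ℝ))]
      refine Finset.sum_congr rfl fun i hi => ?_
      simp only [Finset.mem_Ico] at hi
      rw [accR_eq (by omega) (by omega),
        acc_cast_congr Ag (x := 1 + i + 1 - 1) (y := min (i + 1) (m - 1)) (by omega)
          (by omega) (by omega)]
    have : ∑ i ∈ Finset.Ico k M, c i
        = ∑ i ∈ Finset.Ico k M, (accR Ad (1 + i) - accR Ag (1 + i))
          - ∑ i ∈ Finset.Ico k M, accR Ag (1 + i + 1) := by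
      rw [← Finset.sum_sub_distrib]
    rw [this, e1, e2]
    linarith
  have habel := abel_bound M V c hmono' hnn htail
  have hsplit : ∑ i ∈ Finset.range M, V i * c i
      = ∑ i ∈ Finset.range M, valI v (1 + i) * (accR Ad (1 + i) - accR Ag (1 + i))
        - ∑ i ∈ Finset.range M, valI v (1 + i) * accR Ag (1 + i + 1) := by
    rw [← Finset.sum_sub_distrib]
    refine Finset.sum_congr rfl fun i _ => ?_
    rw [hV, hc]; ring
  rw [hsplit] at habel
  linarith

end BufferModel
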